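/- arXiv:cs/0702090 — 4 statements merged into one kernel-verified Lean document; each statement's English description precedes it below -/
import Mathlib

section
/- Let k ≥ 2 and let P be the convex hull of the k+1 vertices u_j = (cos(2πj/(k+1)), sin(2πj/(k+1))), j = 0,…,k, of a regular (k+1)-gon. For every convex polygon Q ⊆ P that is the convex hull of at most k points there exists a vertex u_j of P with u_j ∉ Q such that ∠y u_j z ≤ (1 − 2/(k+1))·π for all y, z ∈ Q. In particular α(P,Q) ≤ (1 − 2/(k+1))·π for every convex k-gon Q inscribed in P. -/
/-!
STATEMENT 2: Let k ≥ 2 and let P be the convex hull of the k+1 vertices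
u_j = (cos(2πj/(k+1)), sin(2πj/(k+1))), j = 0,…,k, of a regular (k+1)-gon.
For every convex polygon Q ⊆ P that is the convex hull of at most k points there
exists a vertex u_j of P with u_j ∉ Q such that ∠y u_j z ≤ (1 − 2/(k+1))·π for all
y, z ∈ Q.  In particular α(P,Q) ≤ (1 − 2/(k+1))·π for every convex k-gon Q
inscribed in P.
-/

noncomputable section

abbrev Pt := EuclideanSpace ℝ (Fin 2)

/-! Since `T` has at most `k` points, some vertex `u j` lies outside `Q = conv T`: the vertices
lie on the unit circle, hence are extreme points of the unit disc, so a vertex in `Q ⊆ P` must be a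
point of `T`. Seen from `u j`, every other vertex `u i` lies within `π / 2 - π / (k + 1)` of the
inward radius `-u j`, because the arc between them is at least `2π / (k + 1)`. This cone
condition is convex, so it holds on all of `P ⊇ Q`, and two rays within `π / 2 - π / (k + 1)` of a
common direction make an angle of at most `π - 2π / (k + 1)`. -/

open Real InnerProductGeometry Set Metric
open scoped RealInnerProductSpace

section InnerProductSpace

variable {V : Type*} [NormedAddCommGroup V] [InnerProductSpace ℝ V]

theorem convex_setOf_norm_sub_mul_le_inner (p b : V) {c : ℝ} (hc : 0 ≤ c) :
    Convex ℝ {x : V | ‖x - p‖ * c ≤ ⟪x - p, b⟫} := by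
  have hf : ConvexOn ℝ univ fun v : V => c • ‖v‖ - ⟪b, v⟫ :=
    ((convexOn_norm convex_univ).smul hc).sub ((innerₛₗ ℝ b).concaveOn convex_univ)
  simpa [sub_nonpos, mul_comm, real_inner_comm, sub_eq_add_neg] using
    (hf.convex_le 0).translate_preimage_left (-p)

theorem angle_le_of_norm_mul_cos_le_inner {v w : V} (hv : v ≠ 0) (hw : w ≠ 0) {θ : ℝ}
    (hθ₀ : 0 ≤ θ) (hθπ : θ ≤ π) (h : ‖v‖ * ‖w‖ * cos θ ≤ ⟪v, w⟫) : angle v w ≤ θ := by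
  rw [angle, ← arccos_cos hθ₀ hθπ]
  exact arccos_le_arccos ((le_div_iff₀ (by positivity)).2 (by linarith))

theorem angle_le_two_mul_of_norm_sub_mul_cos_le_inner {p x y b : V} (hb : ‖b‖ = 1) {β : ℝ}
    (hβ₀ : 0 ≤ β) (hβπ : β ≤ π) (hx : x ≠ p) (hy : y ≠ p)
    (hxb : ‖x - p‖ * cos β ≤ ⟪x - p, b⟫) (hyb : ‖y - p‖ * cos β ≤ ⟪y - p, b⟫) :
    EuclideanGeometry.angle x p y ≤ 2 * β := by
  have hb₀ : b ≠ 0 := norm_ne_zero_iff.1 (by simp [hb])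
  have hcone : ∀ v : V, v ≠ 0 → ‖v‖ * cos β ≤ ⟪v, b⟫ → angle v b ≤ β := fun v hv h ↦
    angle_le_of_norm_mul_cos_le_inner hv hb₀ hβ₀ hβπ (by rwa [hb, mul_one])
  calc EuclideanGeometry.angle x p y = angle (x - p) (y - p) := rfl
    _ ≤ angle (x - p) b + angle b (y - p) := angle_le_angle_add_angle _ _ _
    _ ≤ β + β := by
      rw [angle_comm b]
      exact add_le_add (hcone _ (sub_ne_zero.2 hx) hxb) (hcone _ (sub_ne_zero.2 hy) hyb)
    _ = 2 * β := (two_mul β).symm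

/-- If the unit vectors `a` and `e` are at least `2 * α` apart, the chord from `a` to `e` makes
an angle of at most `π / 2 - α` with the inward radius `-a`. -/
theorem norm_sub_mul_sin_le_inner_neg {a e : V} (ha : ‖a‖ = 1) (he : ‖e‖ = 1) {α : ℝ}
    (h : ⟪e, a⟫ ≤ cos (2 * α)) : ‖e - a‖ * sin α ≤ ⟪e - a, -a⟫ := by
  have hsq : ‖e - a‖ ^ 2 = 2 * (1 - ⟪e, a⟫) := by rw [norm_sub_sq_real, ha, he]; ring
  have hin : ⟪e - a, -a⟫ = 1 - ⟪e, a⟫ := by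
    rw [inner_neg_right, inner_sub_left, real_inner_self_eq_norm_sq, ha]; ring
  rw [cos_two_mul, cos_sq'] at h
  rw [hin]
  nlinarith [norm_nonneg (e - a), sq_nonneg (‖e - a‖ * sin α - (1 - ⟪e, a⟫))]

theorem norm_sub_mul_sin_le_inner_neg_of_mem_convexHull {ι : Type*} {u : ι → V}
    (hnorm : ∀ i, ‖u i‖ = 1) {α : ℝ} (hα : 0 ≤ sin α)
    (hsep : ∀ i j, i ≠ j → ⟪u i, u j⟫ ≤ cos (2 * α)) (j : ι) {x : V}
    (hx : x ∈ convexHull ℝ (range u)) : ‖x - u j‖ * sin α ≤ ⟪x - u j, -u j⟫ := by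
  refine convexHull_min (range_subset_iff.2 fun i ↦ ?_)
    (convex_setOf_norm_sub_mul_le_inner (u j) (-u j) hα) hx
  rcases eq_or_ne i j with rfl | hij
  · show ‖u i - u i‖ * sin α ≤ ⟪u i - u i, -u i⟫
    simp
  · exact norm_sub_mul_sin_le_inner_neg (hnorm j) (hnorm i) (hsep i j hij)

end InnerProductSpace

theorem mem_of_mem_convexHull_of_mem_sphere {E : Type*} [NormedAddCommGroup E]
    [NormedSpace ℝ E] [StrictConvexSpace ℝ E] {s : Set E} {c x : E} {r : ℝ} (hr : r ≠ 0)
    (hs : convexHull ℝ s ⊆ closedBall c r) (hx : x ∈ sphere c r) (hxs : x ∈ convexHull ℝ s) :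
    x ∈ s :=
  extremePoints_convexHull_subset <| inter_extremePoints_subset_extremePoints_of_subset hs
    ⟨hxs, StrictConvexSpace.sphere_subset_extremePoints_closedBall c hr hx⟩

theorem exists_notMem_convexHull_of_card_lt {E : Type*} [NormedAddCommGroup E]
    [NormedSpace ℝ E] [StrictConvexSpace ℝ E] {ι : Type*} [Fintype ι] {u : ι → E}
    (hu : Function.Injective u) (hnorm : ∀ i, ‖u i‖ = 1) {T : Finset E}
    (hT : T.card < Fintype.card ι) (hTB : convexHull ℝ (T : Set E) ⊆ closedBall 0 1) :
    ∃ i, u i ∉ convexHull ℝ (T : Set E) := by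
  by_contra! h
  have hmem (i : ι) : u i ∈ T :=
    mem_of_mem_convexHull_of_mem_sphere one_ne_zero hTB (by simp [hnorm]) (h i)
  rw [← Finset.card_univ] at hT
  exact hT.not_ge (Finset.card_le_card_of_injOn u (fun i _ ↦ hmem i) hu.injOn)

theorem cos_le_cos_of_le_of_le_two_pi_sub {a x : ℝ} (ha : 0 ≤ a) (hax : a ≤ x)
    (hx : x ≤ 2 * π - a) : cos x ≤ cos a := by
  rcases le_total x π with h | h
  · exact cos_le_cos_of_nonneg_of_le_pi ha h hax
  · rw [← cos_two_pi_sub]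
    exact cos_le_cos_of_nonneg_of_le_pi ha (by linarith) (by linarith)

theorem cos_two_pi_mul_div_le {n d : ℝ} (h₁ : 1 ≤ |d|) (h₂ : |d| ≤ n - 1) :
    cos (2 * π * d / n) ≤ cos (2 * π / n) := by
  have hn : 0 < n := by linarith
  rw [← cos_abs, abs_div, abs_mul, abs_of_pos two_pi_pos, abs_of_pos hn]
  apply cos_le_cos_of_le_of_le_two_pi_sub (by positivity)
  · exact div_le_div_of_nonneg_right (le_mul_of_one_le_right two_pi_pos.le h₁) hn.le
  · rw [div_le_iff₀ hn, sub_mul, div_mul_cancel₀ _ hn.ne']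
    nlinarith [two_pi_pos]

theorem inner_eq_cos_sub_of_eq_cos_sin {x y : Pt} {θ φ : ℝ}
    (hx : x 0 = cos θ ∧ x 1 = sin θ) (hy : y 0 = cos φ ∧ y 1 = sin φ) :
    ⟪x, y⟫ = cos (θ - φ) := by
  simp [PiLp.inner_apply, Fin.sum_univ_two, hx.1, hx.2, hy.1, hy.2, cos_sub]
  ring

theorem norm_eq_one_of_eq_cos_sin {x : Pt} {θ : ℝ} (hx : x 0 = cos θ ∧ x 1 = sin θ) :
    ‖x‖ = 1 := by
  have h := inner_eq_cos_sub_of_eq_cos_sin hx hx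
  rw [sub_self, cos_zero, real_inner_self_eq_norm_sq] at h
  exact (pow_eq_one_iff_of_nonneg (norm_nonneg x) two_ne_zero).1 h

theorem one_le_abs_natCast_sub_natCast {m n : ℕ} (h : m ≠ n) : (1 : ℝ) ≤ |(m : ℝ) - n| := by
  have := Int.one_le_abs (sub_ne_zero.2 (Nat.cast_injective.ne h : (m : ℤ) ≠ n))
  exact_mod_cast this

theorem inner_le_cos_of_eq_cos_sin_two_pi_mul_div {k : ℕ} {u : Fin (k + 1) → Pt}
    (hu : ∀ j : Fin (k + 1), u j 0 = cos (2 * π * (j : ℕ) / ((k : ℝ) + 1)) ∧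
      u j 1 = sin (2 * π * (j : ℕ) / ((k : ℝ) + 1)))
    {i j : Fin (k + 1)} (hij : i ≠ j) : ⟪u i, u j⟫ ≤ cos (2 * (π / ((k : ℝ) + 1))) := by
  have hi : ((i : ℕ) : ℝ) ≤ k := by exact_mod_cast Fin.is_le i
  have hj : ((j : ℕ) : ℝ) ≤ k := by exact_mod_cast Fin.is_le j
  rw [inner_eq_cos_sub_of_eq_cos_sin (hu i) (hu j)]
  convert cos_two_pi_mul_div_le (n := k + 1) (d := (i : ℕ) - (j : ℕ))
    (one_le_abs_natCast_sub_natCast (Fin.val_ne_of_ne hij))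
    (by simpa using abs_sub_le_of_nonneg_of_le (by positivity) hi (by positivity) hj)
    using 2 <;> ring

theorem regular_polygon_aperture_upper_bound (k : ℕ) (hk : 2 ≤ k)
    (u : Fin (k + 1) → Pt)
    (hu : ∀ j : Fin (k + 1),
      u j 0 = Real.cos (2 * Real.pi * (j : ℕ) / ((k : ℝ) + 1)) ∧
      u j 1 = Real.sin (2 * Real.pi * (j : ℕ) / ((k : ℝ) + 1)))
    (T : Finset Pt) (hT : T.card ≤ k)
    (hQP : convexHull ℝ (T : Set Pt) ⊆ convexHull ℝ (Set.range u)) :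
    ∃ j : Fin (k + 1), u j ∉ convexHull ℝ (T : Set Pt) ∧
      ∀ y ∈ convexHull ℝ (T : Set Pt), ∀ z ∈ convexHull ℝ (T : Set Pt),
        EuclideanGeometry.angle y (u j) z ≤ (1 - 2 / ((k : ℝ) + 1)) * Real.pi := by
  set α := π / ((k : ℝ) + 1) with hα
  have hα₀ : 0 ≤ α := by positivity
  have hα₂ : 2 * α ≤ π := by
    have hk' : (2 : ℝ) ≤ k := by exact_mod_cast hk
    rw [hα, mul_div_assoc', div_le_iff₀ (by positivity)]
    nlinarith [pi_pos]
  have hnorm (j : Fin (k + 1)) : ‖u j‖ = 1 := norm_eq_one_of_eq_cos_sin (hu j)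
  have hinner (i j : Fin (k + 1)) (hij : i ≠ j) : ⟪u i, u j⟫ ≤ cos (2 * α) :=
    inner_le_cos_of_eq_cos_sin_two_pi_mul_div hu hij
  have hinj : Function.Injective u := by
    intro i j hij
    by_contra hne
    have h := hinner i j hne
    rw [hij, real_inner_self_eq_norm_sq, hnorm, one_pow] at h
    exact h.not_gt (by simpa using cos_lt_cos_of_nonneg_of_le_pi le_rfl hα₂ (by positivity))
  have hball : convexHull ℝ (range u) ⊆ closedBall 0 1 :=
    convexHull_min (range_subset_iff.2 fun j ↦ by simp [hnorm]) (convex_closedBall 0 1)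
  obtain ⟨j, hj⟩ := exists_notMem_convexHull_of_card_lt hinj hnorm
    (by simpa using Nat.lt_succ_of_le hT) (hQP.trans hball)
  have hcone (x : Pt) (hx : x ∈ convexHull ℝ (range u)) :
      ‖x - u j‖ * sin α ≤ ⟪x - u j, -u j⟫ :=
    norm_sub_mul_sin_le_inner_neg_of_mem_convexHull hnorm
      (sin_nonneg_of_nonneg_of_le_pi hα₀ (by linarith)) hinner j hx
  refine ⟨j, hj, fun y hy z hz ↦ ?_⟩
  calc EuclideanGeometry.angle y (u j) z ≤ 2 * (π / 2 - α) := by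
        refine angle_le_two_mul_of_norm_sub_mul_cos_le_inner (b := -u j) (by simp [hnorm])
          (by linarith) (by linarith) (ne_of_mem_of_not_mem hy hj) (ne_of_mem_of_not_mem hz hj)
          ?_ ?_ <;> rw [cos_pi_div_two_sub]
        exacts [hcone y (hQP hy), hcone z (hQP hz)]
    _ = (1 - 2 / ((k : ℝ) + 1)) * π := by rw [hα]; ring
end
end

section
/- For every compact convex set C ⊆ ℝ² and every integer k ≥ 3 there exists a convex polygon Q ⊆ C with at most k vertices such that for every point x ∈ C \ Q there are points y, z ∈ Q with ∠yxz ≥ (1 − 2/k)·π; that is, α(C,Q) ≥ (1 − 2/k)·π. -/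
/-!
STATEMENT 3: For every compact convex set C ⊆ ℝ² and every integer k ≥ 3 there
exists a convex polygon Q ⊆ C with at most k vertices such that for every point
x ∈ C \ Q there are points y, z ∈ Q with ∠yxz ≥ (1 − 2/k)·π; that is,
α(C,Q) ≥ (1 − 2/k)·π.
-/

noncomputable section

/- Let `y_i ∈ C` maximise `⟪·, u_i⟫` for the unit vectors `u_i` at angles `2πi/k`, and let `Q` be
the hull of the `y_i`. A point `x ∈ C \ Q` is strictly separated from `Q` by a direction `v`
lying in some sector between `u_j` and `u_{j+1}`, of width `2π/k`. Both `y_j - x` and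
`y_{j+1} - x` make an obtuse angle with `v`, while `⟪y_j - x, u_j⟫ ≥ 0` and
`⟪y_{j+1} - x, u_{j+1}⟫ ≥ 0`. In the plane this puts them within angles `β` and `γ` of the two
opposite normals of `v`, where `β` and `γ` are the angles from `v` to `u_j` and `u_{j+1}`; since
`β + γ = 2π/k`, they span an angle of at least `π - 2π/k`. -/

open Real InnerProductGeometry
open scoped RealInnerProductSpace

def dir (θ : ℝ) : Pt := !₂[cos θ, sin θ]

lemma inner_dir (a : Pt) (θ : ℝ) : ⟪a, dir θ⟫ = a 0 * cos θ + a 1 * sin θ := by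
  simp [dir, PiLp.inner_apply, Fin.sum_univ_two, mul_comm]

lemma inner_dir_dir (s t : ℝ) : ⟪dir s, dir t⟫ = cos (s - t) := by
  rw [inner_dir, cos_sub]
  simp [dir]

lemma norm_dir (θ : ℝ) : ‖dir θ‖ = 1 := by
  have h := real_inner_self_eq_norm_sq (dir θ)
  rw [inner_dir_dir, sub_self, cos_zero] at h
  nlinarith [norm_nonneg (dir θ)]

lemma dir_add_int_mul_two_pi (θ : ℝ) (n : ℤ) : dir (θ + n * (2 * π)) = dir θ := by
  simp [dir, cos_add_int_mul_two_pi, sin_add_int_mul_two_pi]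

lemma exists_eq_norm_smul_dir (a : Pt) : ∃ θ, a = ‖a‖ • dir θ := by
  set z := Complex.orthonormalBasisOneI.repr.symm a
  have hz : ‖z‖ = ‖a‖ := Complex.orthonormalBasisOneI.repr.symm.norm_map a
  refine ⟨Complex.arg z, ?_⟩
  ext i
  fin_cases i
  · simp [dir, ← hz, Complex.norm_mul_cos_arg, z]
  · simp [dir, ← hz, Complex.norm_mul_sin_arg, z]

lemma angle_dir_dir (s t : ℝ) : angle (dir s) (dir t) = arccos (cos (s - t)) := by
  rw [angle, inner_dir_dir, norm_dir, norm_dir, mul_one, div_one]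

lemma cos_sub_le_neg_cos_of_mem_Ioo {s t β γ : ℝ} (hβ₀ : 0 ≤ β) (hγ₀ : 0 ≤ γ) (hβγ : β + γ ≤ π)
    (hs : s ∈ Set.Ioo (π / 2) (3 * π / 2)) (ht : t ∈ Set.Ioo (π / 2) (3 * π / 2))
    (hsβ : 0 ≤ cos (s + β)) (htγ : 0 ≤ cos (t - γ)) :
    cos (s - t) ≤ -cos (β + γ) := by
  obtain ⟨hs₁, hs₂⟩ := hs
  obtain ⟨ht₁, ht₂⟩ := ht
  have hβ : 3 * π / 2 ≤ s + β := by
    by_contra! h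
    linarith [cos_neg_of_pi_div_two_lt_of_lt (x := s + β) (by linarith) (by linarith)]
  have hγ : t - γ ≤ π / 2 := by
    by_contra! h
    linarith [cos_neg_of_pi_div_two_lt_of_lt (x := t - γ) h (by linarith)]
  rw [← cos_pi_sub]
  exact cos_le_cos_of_nonneg_of_le_pi (by linarith) (by linarith) (by linarith)

lemma exists_int_sub_mem_Ioo_of_cos_neg {x : ℝ} (hx : cos x < 0) :
    ∃ n : ℤ, x - n * (2 * π) ∈ Set.Ioo (π / 2) (3 * π / 2) := by
  set n := toIcoDiv two_pi_pos (-(π / 2)) x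
  have hmod : x - n * (2 * π) = toIcoMod two_pi_pos (-(π / 2)) x := by
    rw [← zsmul_eq_mul]
    exact self_sub_toIcoDiv_zsmul two_pi_pos _ x
  obtain ⟨h₁, h₂⟩ := toIcoMod_mem_Ico two_pi_pos (-(π / 2)) x
  rw [← hmod] at h₁ h₂
  refine ⟨n, ?_, by linarith⟩
  by_contra! h
  linarith [cos_nonneg_of_neg_pi_div_two_le_of_le h₁ h, cos_sub_int_mul_two_pi x n]

lemma cos_sub_le_neg_cos {s t β γ : ℝ} (hβ : 0 ≤ β) (hγ : 0 ≤ γ) (hβγ : β + γ ≤ π)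
    (hs : cos s < 0) (ht : cos t < 0) (hsβ : 0 ≤ cos (s + β)) (htγ : 0 ≤ cos (t - γ)) :
    cos (s - t) ≤ -cos (β + γ) := by
  obtain ⟨m, hm⟩ := exists_int_sub_mem_Ioo_of_cos_neg hs
  obtain ⟨n, hn⟩ := exists_int_sub_mem_Ioo_of_cos_neg ht
  have key := cos_sub_le_neg_cos_of_mem_Ioo hβ hγ hβγ hm hn
    (by rwa [sub_add_eq_add_sub, cos_sub_int_mul_two_pi])
    (by rwa [sub_right_comm, cos_sub_int_mul_two_pi])
  rwa [show s - m * (2 * π) - (t - n * (2 * π)) = s - t - ((m - n : ℤ) : ℝ) * (2 * π) by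
    push_cast; ring, cos_sub_int_mul_two_pi] at key

lemma pi_sub_le_angle {θ₁ φ θ₂ : ℝ} (h₁ : θ₁ ≤ φ) (h₂ : φ ≤ θ₂) (hπ : θ₂ - θ₁ ≤ π) {a b : Pt}
    (ha : ⟪a, dir φ⟫ < 0) (hb : ⟪b, dir φ⟫ < 0) (ha₁ : 0 ≤ ⟪a, dir θ₁⟫) (hb₂ : 0 ≤ ⟪b, dir θ₂⟫) :
    π - (θ₂ - θ₁) ≤ angle a b := by
  obtain ⟨α, hα⟩ := exists_eq_norm_smul_dir a
  obtain ⟨τ, hτ⟩ := exists_eq_norm_smul_dir b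
  rw [hα, real_inner_smul_left, inner_dir_dir] at ha ha₁
  rw [hτ, real_inner_smul_left, inner_dir_dir] at hb hb₂
  have ha₀ : 0 < ‖a‖ := (norm_nonneg a).lt_of_ne' (left_ne_zero_of_mul ha.ne)
  have hb₀ : 0 < ‖b‖ := (norm_nonneg b).lt_of_ne' (left_ne_zero_of_mul hb.ne)
  have hcos : cos (α - τ) ≤ -cos (θ₂ - θ₁) := by
    have := cos_sub_le_neg_cos (s := α - φ) (t := τ - φ) (β := φ - θ₁) (γ := θ₂ - φ)
      (by linarith) (by linarith) (by linarith)
      (neg_of_mul_neg_right ha (norm_nonneg a)) (neg_of_mul_neg_right hb (norm_nonneg b))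
      (by simpa using nonneg_of_mul_nonneg_right ha₁ ha₀)
      (by simpa using nonneg_of_mul_nonneg_right hb₂ hb₀)
    simpa using this
  rw [hα, hτ, angle_smul_left_of_pos _ _ ha₀, angle_smul_right_of_pos _ _ hb₀, angle_dir_dir]
  calc π - (θ₂ - θ₁) = arccos (-cos (θ₂ - θ₁)) := by
        rw [arccos_neg, arccos_cos (by linarith) hπ]
    _ ≤ arccos (cos (α - τ)) := arccos_le_arccos hcos

lemma exists_dir_inner_sub_neg {Q : Set Pt} (hQ : Convex ℝ Q) (hQc : IsClosed Q) {x : Pt}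
    (hx : x ∉ Q) : ∃ φ, ∀ q ∈ Q, ⟪q - x, dir φ⟫ < 0 := by
  obtain ⟨F, u, hFQ, hFx⟩ := geometric_hahn_banach_closed_point hQ hQc hx
  set v := (InnerProductSpace.toDual ℝ Pt).symm F
  obtain ⟨φ, hφ⟩ := exists_eq_norm_smul_dir v
  refine ⟨φ, fun q hq ↦ neg_of_mul_neg_right ?_ (norm_nonneg v)⟩
  rw [← real_inner_smul_right, ← hφ, real_inner_comm, inner_sub_right,
    InnerProductSpace.toDual_symm_apply, InnerProductSpace.toDual_symm_apply]
  linarith [hFQ q hq]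

lemma exists_int_two_pi_div_le {k : ℕ} (hk : k ≠ 0) (φ : ℝ) :
    ∃ j : ℤ, 2 * π * j / k ≤ φ ∧ φ ≤ 2 * π * (j + 1) / k := by
  have hk₀ : (0 : ℝ) < k := by positivity
  refine ⟨⌊φ * k / (2 * π)⌋, ?_, ?_⟩
  · rw [div_le_iff₀ hk₀, ← le_div_iff₀' two_pi_pos]
    exact Int.floor_le _
  · rw [le_div_iff₀ hk₀, ← div_le_iff₀' two_pi_pos]
    exact (Int.lt_floor_add_one _).le

lemma exists_fin_dir_eq {k : ℕ} (hk : k ≠ 0) (j : ℤ) :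
    ∃ i : Fin k, dir (2 * π * (i : ℕ) / k) = dir (2 * π * j / k) := by
  have hk' : (0 : ℤ) < k := by omega
  refine ⟨⟨(j % k).toNat, by have := Int.emod_lt_of_pos j hk'; omega⟩, ?_⟩
  have hz : (((j % k).toNat : ℕ) : ℤ) + j / k * k = j := by
    rw [Int.toNat_of_nonneg (Int.emod_nonneg _ hk'.ne')]
    exact Int.emod_add_ediv_mul j k
  have hj : (j : ℝ) = (((j % k).toNat : ℕ) : ℝ) + (j / k : ℤ) * k := by exact_mod_cast hz.symm
  rw [hj, mul_add, add_div, ← dir_add_int_mul_two_pi _ (j / k)]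
  congr 2
  field_simp

lemma exists_le_angle_of_isMaxOn_dir {k : ℕ} (hk : 2 ≤ k) {C : Set Pt} {f : Fin k → Pt}
    (hf : ∀ i : Fin k, IsMaxOn (fun q ↦ ⟪q, dir (2 * π * (i : ℕ) / k)⟫) C (f i))
    {x : Pt} (hxC : x ∈ C) (hxQ : x ∉ convexHull ℝ (Set.range f)) :
    ∃ y ∈ convexHull ℝ (Set.range f), ∃ z ∈ convexHull ℝ (Set.range f),
      (1 - 2 / (k : ℝ)) * π ≤ EuclideanGeometry.angle y x z := by
  have hk₀ : k ≠ 0 := by omega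
  have hvertex : ∀ j : ℤ, ∃ i, ∀ q ∈ C, 0 ≤ ⟪f i - q, dir (2 * π * j / k)⟫ := fun j ↦ by
    obtain ⟨i, hi⟩ := exists_fin_dir_eq hk₀ j
    refine ⟨i, fun q hq ↦ ?_⟩
    rw [← hi, inner_sub_left, sub_nonneg]
    exact hf i hq
  have hmem : ∀ i, f i ∈ convexHull ℝ (Set.range f) := fun i ↦ subset_convexHull ℝ _ ⟨i, rfl⟩
  obtain ⟨φ, hφ⟩ := exists_dir_inner_sub_neg (convex_convexHull ℝ _)
    ((Set.finite_range f).isCompact_convexHull ℝ).isClosed hxQ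
  obtain ⟨j, hj₁, hj₂⟩ := exists_int_two_pi_div_le hk₀ φ
  obtain ⟨i₁, hi₁⟩ := hvertex j
  obtain ⟨i₂, hi₂⟩ := hvertex (j + 1)
  push_cast at hi₂
  have hsector : 2 * π * (j + 1) / k - 2 * π * j / k ≤ π := by
    have hk' : (2 : ℝ) ≤ k := by exact_mod_cast hk
    rw [← sub_div, div_le_iff₀ (by positivity)]
    nlinarith [pi_pos]
  refine ⟨f i₁, hmem i₁, f i₂, hmem i₂, ?_⟩
  calc (1 - 2 / (k : ℝ)) * π = π - (2 * π * (j + 1) / k - 2 * π * j / k) := by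
        field_simp
        ring
    _ ≤ angle (f i₁ - x) (f i₂ - x) :=
        pi_sub_le_angle hj₁ hj₂ hsector (hφ _ (hmem i₁)) (hφ _ (hmem i₂)) (hi₁ x hxC) (hi₂ x hxC)

theorem aperture_angle_easy_lower_bound (k : ℕ) (hk : 3 ≤ k)
    (C : Set Pt) (hCc : IsCompact C) (hCconv : Convex ℝ C) (hCne : C.Nonempty) :
    ∃ f : Fin k → Pt, convexHull ℝ (Set.range f) ⊆ C ∧
      ∀ x ∈ C \ convexHull ℝ (Set.range f),
        ∃ y ∈ convexHull ℝ (Set.range f), ∃ z ∈ convexHull ℝ (Set.range f),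
          (1 - 2 / (k : ℝ)) * Real.pi ≤ EuclideanGeometry.angle y x z := by
  choose m hmC hm using fun θ : ℝ ↦ hCc.exists_isMaxOn hCne
    (continuous_id.inner (𝕜 := ℝ) (continuous_const (y := dir θ))).continuousOn
  exact ⟨fun i ↦ m (2 * π * (i : ℕ) / k),
    convexHull_min (Set.range_subset_iff.2 fun i ↦ hmC _) hCconv,
    fun x hx ↦ exists_le_angle_of_isMaxOn_dir (by omega) (fun i ↦ hm _) hx.1 hx.2⟩
end
end

section
/- Let ℓ be an oriented line in ℝ², and let D and D' be closed disks (of radii ρ and ρ') whose centers lie strictly to the left of ℓ. If D' ∩ ℓ ⊆ D ∩ ℓ and there exists a point p ∈ D' \ D lying strictly to the right of ℓ, then ρ' < ρ. -/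
/-!
Suppose `ρ ≤ ρ'`. In coordinates where `ℓ` is the horizontal axis, a disk with
centre `(u, h)` and radius `R` meets `ℓ` in the chord `|s - u| ≤ r := √(R² - h²)`.
The inclusion of chords gives `r' + |u' - u| ≤ r`, hence
`h'² = R'² - r'² ≥ R² - r² = h²`: the centre of `D` is no higher than that of `D'`.
A point `(t, y)` lies in a disk iff `(t - u)² + (y² - 2yh) ≤ r²`, and for `y ≤ 0`
this condition for `D'` implies it for `D`, because the chord of `D` is wider and
contains that of `D'`, and `-2yh ≤ -2yh'`. So `D' \ D` has no point to the right
of `ℓ`.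
-/

noncomputable section

/-- The cross product of the direction `d` with `x - a`; its sign tells on which
side of the oriented line through `a` with direction `d` the point `x` lies. -/
def sideVal (a d x : Pt) : ℝ :=
  d 0 * (x 1 - a 1) - d 1 * (x 0 - a 0)

section Planar

variable {u h u' h' R R' : ℝ}

theorem sqrt_add_abs_sub_le_sqrt_of_chord_subset (hh'R' : h' ^ 2 ≤ R' ^ 2)
    (hchord : ∀ s, (s - u') ^ 2 + (0 - h') ^ 2 ≤ R' ^ 2 →
      (s - u) ^ 2 + (0 - h) ^ 2 ≤ R ^ 2) :
    √(R' ^ 2 - h' ^ 2) + |u' - u| ≤ √(R ^ 2 - h ^ 2) := by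
  set r' := √(R' ^ 2 - h' ^ 2)
  have hr' : r' ^ 2 = R' ^ 2 - h' ^ 2 := Real.sq_sqrt (by linarith)
  have endpoint (s : ℝ) (hs : |s - u'| = r') : |s - u| ≤ √(R ^ 2 - h ^ 2) := by
    have := hchord s (by rw [← sq_abs, hs]; linarith)
    exact Real.abs_le_sqrt (by linarith)
  have hr'0 : 0 ≤ r' := Real.sqrt_nonneg _
  have right := abs_le.1 (endpoint (u' + r') (by simp [abs_of_nonneg hr'0]))
  have left := abs_le.1 (endpoint (u' - r') (by simp [abs_of_nonneg hr'0]))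
  have : |u' - u| ≤ √(R ^ 2 - h ^ 2) - r' := abs_le.2 ⟨by linarith, by linarith⟩
  linarith

theorem sq_add_le_sq_of_chord_gap {r r' t y : ℝ} (hr' : 0 ≤ r') (hgap : r' + |u' - u| ≤ r)
    (hh : h ≤ h') (hh' : 0 ≤ h') (hy : y ≤ 0)
    (hp : (t - u') ^ 2 + (y ^ 2 - 2 * y * h') ≤ r' ^ 2) :
    (t - u) ^ 2 + (y ^ 2 - 2 * y * h) ≤ r ^ 2 := by
  have hdepth : 0 ≤ y ^ 2 - 2 * y * h' := by nlinarith
  have hA : |t - u'| ≤ r' := by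
    rw [← sq_le_sq₀ (abs_nonneg _) hr', sq_abs]
    linarith
  have htu : (t - u) ^ 2 ≤ (|t - u'| + |u' - u|) ^ 2 := by
    rw [← sq_abs]
    gcongr
    exact abs_sub_le t u' u
  calc (t - u) ^ 2 + (y ^ 2 - 2 * y * h)
      ≤ (|t - u'| + |u' - u|) ^ 2 + (y ^ 2 - 2 * y * h') := by
        nlinarith [mul_nonneg (neg_nonneg.2 hy) (sub_nonneg.2 hh)]
    _ ≤ (r' + |u' - u|) ^ 2 := by
        nlinarith [mul_le_mul_of_nonneg_right hA (abs_nonneg (u' - u)), sq_abs (t - u')]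
    _ ≤ r ^ 2 := by gcongr

theorem sq_add_sq_le_of_chord_subset {t y : ℝ} (hR : 0 ≤ R) (hRR' : R ≤ R') (hh' : 0 ≤ h')
    (hy : y ≤ 0)
    (hchord : ∀ s, (s - u') ^ 2 + (0 - h') ^ 2 ≤ R' ^ 2 →
      (s - u) ^ 2 + (0 - h) ^ 2 ≤ R ^ 2)
    (hp : (t - u') ^ 2 + (y - h') ^ 2 ≤ R' ^ 2) :
    (t - u) ^ 2 + (y - h) ^ 2 ≤ R ^ 2 := by
  have hh'R' : h' ^ 2 ≤ R' ^ 2 := by nlinarith [sq_nonneg (t - u')]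
  have hhR : h ^ 2 ≤ R ^ 2 := by
    have := hchord u' (by linarith)
    nlinarith [sq_nonneg (u' - u)]
  have hgap := sqrt_add_abs_sub_le_sqrt_of_chord_subset hh'R' hchord
  have hh : h ≤ h' := by
    have hwidth : R' ^ 2 - h' ^ 2 ≤ R ^ 2 - h ^ 2 :=
      Real.sqrt_le_sqrt_iff (by linarith) |>.1 (by linarith [abs_nonneg (u' - u)])
    have : h ^ 2 ≤ h' ^ 2 := by nlinarith
    exact (abs_le_of_sq_le_sq' this hh').2
  have := sq_add_le_sq_of_chord_gap (t := t) (Real.sqrt_nonneg _) hgap hh hh' hy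
    (by rw [Real.sq_sqrt (by linarith)]; linarith)
  rw [Real.sq_sqrt (by linarith)] at this
  linarith

end Planar

def alongVal (a d x : Pt) : ℝ :=
  d 0 * (x 0 - a 0) + d 1 * (x 1 - a 1)

theorem alongVal_sub_sq_add_sideVal_sub_sq (a d x y : Pt) :
    (alongVal a d x - alongVal a d y) ^ 2 + (sideVal a d x - sideVal a d y) ^ 2 =
      ‖d‖ ^ 2 * dist x y ^ 2 := by
  rw [EuclideanSpace.dist_eq, Real.sq_sqrt (by positivity), EuclideanSpace.real_norm_sq_eq]
  simp only [Fin.sum_univ_two, alongVal, sideVal, Real.dist_eq, sq_abs]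
  ring

theorem mem_closedBall_iff_alongVal_sideVal {a d : Pt} (hd : d ≠ 0) {x z : Pt} {ρ : ℝ}
    (hρ : 0 ≤ ρ) :
    x ∈ Metric.closedBall z ρ ↔
      (alongVal a d x - alongVal a d z) ^ 2 + (sideVal a d x - sideVal a d z) ^ 2 ≤
        (‖d‖ * ρ) ^ 2 := by
  rw [alongVal_sub_sq_add_sideVal_sub_sq, mul_pow,
    mul_le_mul_iff_right₀ (by positivity), sq_le_sq₀ dist_nonneg hρ, Metric.mem_closedBall]

theorem exists_sideVal_eq_zero_alongVal_eq (a : Pt) {d : Pt} (hd : d ≠ 0) (s : ℝ) :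
    ∃ x, sideVal a d x = 0 ∧ alongVal a d x = s := by
  have hd2 : d 0 ^ 2 + d 1 ^ 2 ≠ 0 := by
    simpa [EuclideanSpace.real_norm_sq_eq, Fin.sum_univ_two] using
      pow_ne_zero 2 (norm_ne_zero_iff.2 hd)
  refine ⟨a + (s / (d 0 ^ 2 + d 1 ^ 2)) • d, ?_, ?_⟩
  · simp only [sideVal, PiLp.add_apply, PiLp.smul_apply, smul_eq_mul]
    ring
  · simp only [alongVal, PiLp.add_apply, PiLp.smul_apply, smul_eq_mul]
    field_simp
    ring

theorem disk_radius_comparison_general (a d : Pt) (hd : d ≠ 0)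
    (c c' p : Pt) (ρ ρ' : ℝ) (hρ : 0 ≤ ρ) (hρ' : 0 ≤ ρ')
    (hc' : 0 < sideVal a d c')
    (hsub : Metric.closedBall c' ρ' ∩ {x : Pt | sideVal a d x = 0} ⊆
            Metric.closedBall c ρ ∩ {x : Pt | sideVal a d x = 0})
    (hp₁ : p ∈ Metric.closedBall c' ρ') (hp₂ : p ∉ Metric.closedBall c ρ)
    (hp₃ : sideVal a d p < 0) :
    ρ' < ρ := by
  refine lt_of_not_ge fun hle => hp₂ ?_
  rw [mem_closedBall_iff_alongVal_sideVal hd hρ]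
  refine sq_add_sq_le_of_chord_subset (mul_nonneg (norm_nonneg d) hρ)
    (mul_le_mul_of_nonneg_left hle (norm_nonneg d)) hc'.le hp₃.le (fun s hs => ?_)
    ((mem_closedBall_iff_alongVal_sideVal hd hρ').1 hp₁)
  obtain ⟨x, hx, rfl⟩ := exists_sideVal_eq_zero_alongVal_eq a hd s
  rw [← hx] at hs ⊢
  exact (mem_closedBall_iff_alongVal_sideVal hd hρ).1
    (hsub ⟨(mem_closedBall_iff_alongVal_sideVal hd hρ').2 hs, hx⟩).1

theorem disk_radius_comparison (a d : Pt) (hd : d ≠ 0)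
    (c c' p : Pt) (ρ ρ' : ℝ) (hρ : 0 ≤ ρ) (hρ' : 0 ≤ ρ')
    (hc : 0 < sideVal a d c) (hc' : 0 < sideVal a d c')
    (hsub : Metric.closedBall c' ρ' ∩ {x : Pt | sideVal a d x = 0} ⊆
            Metric.closedBall c ρ ∩ {x : Pt | sideVal a d x = 0})
    (hp₁ : p ∈ Metric.closedBall c' ρ') (hp₂ : p ∉ Metric.closedBall c ρ)
    (hp₃ : sideVal a d p < 0) :
    ρ' < ρ :=
  disk_radius_comparison_general a d hd c c' p ρ ρ' hρ hρ' hc' hsub hp₁ hp₂ hp₃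
end
end

section
/- Let k > 2 and let P be a regular (k+1)-gon in ℝ² with perimeter 1, with vertex set V = {u_0,…,u_k}. Then for every j the Hausdorff distance between P and the convex hull of V \ {u_j} equals (1/(k+1))·sin(π/(k+1)); consequently the bound of the previous statement is attained, i.e. min over j of this Hausdorff distance equals (1/(k+1))·sin(π/(k+1)). -/
/-!
STATEMENT 8: Let k > 2 and let P be a regular (k+1)-gon in ℝ² with perimeter 1,
with vertex set V = {u_0,…,u_k}.  Then for every j the Hausdorff distance between
P and the convex hull of V \ {u_j} equals (1/(k+1))·sin(π/(k+1)); consequently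
the minimum over j of this Hausdorff distance equals (1/(k+1))·sin(π/(k+1)).

A regular (k+1)-gon with perimeter 1 is the convex hull of k+1 points equally
spaced on a circle (of some center `c` and any phase `θ`), each edge having
length 1/(k+1); this forces the circumradius to be
R = 1/(2(k+1)·sin(π/(k+1))).
-/

set_option maxHeartbeats 1000000

noncomputable section

private lemma pt_norm (v : Pt) : ‖v‖ = Real.sqrt ((v 0)^2 + (v 1)^2) := by
  rw [EuclideanSpace.norm_eq]
  simp [Fin.sum_univ_two, Real.norm_eq_abs, sq_abs]

private lemma pt_norm_eq (v : Pt) (r : ℝ) (hr : 0 ≤ r)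
    (h : (v 0)^2 + (v 1)^2 = r^2) : ‖v‖ = r := by
  rw [pt_norm, h, Real.sqrt_sq hr]

private lemma cs_bound (a b : ℝ) (hab : a^2 + b^2 = 1) (v : Pt) :
    a * v 0 + b * v 1 ≤ ‖v‖ := by
  rw [pt_norm]
  rcases le_or_gt (a * v 0 + b * v 1) 0 with h | h
  · exact h.trans (Real.sqrt_nonneg _)
  · rw [← Real.sqrt_sq h.le]
    apply Real.sqrt_le_sqrt
    nlinarith [sq_nonneg (b * v 0 - a * v 1)]

private lemma cos_le_of_between (β x : ℝ) (hβ : 0 < β)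
    (h1 : β ≤ x) (h2 : x ≤ 2 * Real.pi - β) : Real.cos x ≤ Real.cos β := by
  rcases le_or_gt x Real.pi with h | h
  · exact Real.cos_le_cos_of_nonneg_of_le_pi hβ.le h h1
  · rw [show x = 2 * Real.pi - (2 * Real.pi - x) by ring, Real.cos_two_pi_sub]
    exact Real.cos_le_cos_of_nonneg_of_le_pi hβ.le (by linarith) (by linarith)

private lemma mid_apply (x y : Pt) (t : Fin 2) :
    midpoint ℝ x y t = (x t + y t) / 2 := by
  rw [midpoint_eq_smul_add, PiLp.smul_apply, PiLp.add_apply]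
  simp [smul_eq_mul]
  ring

theorem regular_polygon_hausdorff (k : ℕ) (hk : 2 < k) (c : Pt) (θ : ℝ)
    (u : ZMod (k + 1) → Pt)
    (hu : ∀ j : ZMod (k + 1),
      u j 0 = c 0 + (1 / (2 * ((k : ℝ) + 1) * Real.sin (Real.pi / ((k : ℝ) + 1)))) *
        Real.cos (θ + 2 * Real.pi * (j.val : ℝ) / ((k : ℝ) + 1)) ∧
      u j 1 = c 1 + (1 / (2 * ((k : ℝ) + 1) * Real.sin (Real.pi / ((k : ℝ) + 1)))) *
        Real.sin (θ + 2 * Real.pi * (j.val : ℝ) / ((k : ℝ) + 1))) :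
    (∀ j : ZMod (k + 1),
      Metric.hausdorffDist (convexHull ℝ (Set.range u))
          (convexHull ℝ (u '' {i | i ≠ j})) =
        (1 / ((k : ℝ) + 1)) * Real.sin (Real.pi / ((k : ℝ) + 1))) ∧
    (⨅ j : ZMod (k + 1),
      Metric.hausdorffDist (convexHull ℝ (Set.range u))
          (convexHull ℝ (u '' {i | i ≠ j}))) =
        (1 / ((k : ℝ) + 1)) * Real.sin (Real.pi / ((k : ℝ) + 1)) := by
  haveI : NeZero (k + 1) := ⟨k.succ_ne_zero⟩
  haveI : Fact (1 < k + 1) := ⟨by omega⟩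
  have main : ∀ j : ZMod (k + 1),
      Metric.hausdorffDist (convexHull ℝ (Set.range u))
          (convexHull ℝ (u '' {i | i ≠ j})) =
        (1 / ((k : ℝ) + 1)) * Real.sin (Real.pi / ((k : ℝ) + 1)) := by
    intro j
    classical
    set N : ℝ := (k : ℝ) + 1 with hNdef
    have hk3 : (3 : ℝ) ≤ (k : ℝ) := by exact_mod_cast hk
    have hN4 : (4 : ℝ) ≤ N := by rw [hNdef]; linarith
    have hNpos : (0 : ℝ) < N := by linarith
    have hπ := Real.pi_pos
    have hs : 0 < Real.sin (Real.pi / N) := by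
      apply Real.sin_pos_of_pos_of_lt_pi (by positivity)
      rw [div_lt_iff₀ hNpos]; nlinarith
    set s : ℝ := Real.sin (Real.pi / N) with hsdef
    set R : ℝ := 1 / (2 * N * s) with hRdef
    have hRpos : 0 < R := by rw [hRdef]; positivity
    set β : ℝ := 2 * Real.pi / N with hβdef
    have hβpos : 0 < β := by rw [hβdef]; positivity
    have hβN : β * N = 2 * Real.pi := by rw [hβdef]; field_simp
    have hkN : ((k : ℕ) : ℝ) = N - 1 := by rw [hNdef]; ring
    have hcos1 : Real.cos β ≤ 1 := Real.cos_le_one β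
    have hdpos : 0 ≤ R * (1 - Real.cos β) := by nlinarith
    have hd : R * (1 - Real.cos β) = 1 / N * s := by
      have h2 : Real.cos β = 1 - 2 * s ^ 2 := by
        have hβ2 : β = 2 * (Real.pi / N) := by rw [hβdef]; ring
        rw [hβ2, Real.cos_two_mul]
        have := Real.sin_sq_add_cos_sq (Real.pi / N)
        rw [hsdef]; nlinarith
      rw [h2, hRdef]
      field_simp
      ring
    -- periodicity lemma
    have key : ∀ i i' : ZMod (k + 1), ∃ t : ℤ,
        θ + 2 * Real.pi * (i.val : ℝ) / N
          = (θ + 2 * Real.pi * (i'.val : ℝ) / N + β * (((i - i').val : ℕ) : ℝ))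
            + (t : ℝ) * (2 * Real.pi) := by
      intro i i'
      refine ⟨-(((i'.val + (i - i').val) / (k + 1) : ℕ) : ℤ), ?_⟩
      have hval : i.val = (i'.val + (i - i').val) % (k + 1) := by
        conv_lhs => rw [show i = i' + (i - i') by ring]
        rw [ZMod.val_add]
      have hdm := Nat.div_add_mod (i'.val + (i - i').val) (k + 1)
      have hr : (((i'.val + (i - i').val) % (k + 1) : ℕ) : ℝ)
          = (i'.val : ℝ) + (((i - i').val : ℕ) : ℝ)
            - N * (((i'.val + (i - i').val) / (k + 1) : ℕ) : ℝ) := by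
        have h := congrArg (fun x : ℕ => (x : ℝ)) hdm
        push_cast at h
        rw [hNdef]; linarith
      rw [hval, hr, hβdef, Int.cast_neg, Int.cast_natCast]
      field_simp
      ring
    have hcosγ : ∀ i i' : ZMod (k + 1),
        Real.cos (θ + 2 * Real.pi * (i.val : ℝ) / N)
          = Real.cos ((θ + 2 * Real.pi * (i'.val : ℝ) / N) + β * (((i - i').val : ℕ) : ℝ)) := by
      intro i i'
      obtain ⟨t, ht⟩ := key i i'
      rw [ht, Real.cos_add_int_mul_two_pi]
    have hsinγ : ∀ i i' : ZMod (k + 1),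
        Real.sin (θ + 2 * Real.pi * (i.val : ℝ) / N)
          = Real.sin ((θ + 2 * Real.pi * (i'.val : ℝ) / N) + β * (((i - i').val : ℕ) : ℝ)) := by
      intro i i'
      obtain ⟨t, ht⟩ := key i i'
      rw [ht, Real.sin_add_int_mul_two_pi]
    set g : ℝ := θ + 2 * Real.pi * (j.val : ℝ) / N with hgdef
    have hu0 : ∀ i : ZMod (k + 1),
        u i 0 = c 0 + R * Real.cos (g + β * (((i - j).val : ℕ) : ℝ)) := by
      intro i; rw [(hu i).1, hcosγ i j]
    have hu1 : ∀ i : ZMod (k + 1),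
        u i 1 = c 1 + R * Real.sin (g + β * (((i - j).val : ℕ) : ℝ)) := by
      intro i; rw [(hu i).2, hsinγ i j]
    have hwj0 : u j 0 = c 0 + R * Real.cos g := by
      have h := hu0 j
      rw [sub_self, ZMod.val_zero] at h
      simpa using h
    have hwj1 : u j 1 = c 1 + R * Real.sin g := by
      have h := hu1 j
      rw [sub_self, ZMod.val_zero] at h
      simpa using h
    -- neighbor indices
    have hj1 : (j + 1 - j).val = 1 := by
      rw [show j + 1 - j = 1 by ring, ZMod.val_one]
    have hjm1 : (j - 1 - j).val = k := by
      rw [show j - 1 - j = -1 by ring]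
      have h0 : ((k : ℕ) : ZMod (k + 1)) + 1 = 0 := by
        have := ZMod.natCast_self (k + 1)
        push_cast at this
        linear_combination this
      rw [show (-1 : ZMod (k + 1)) = ((k : ℕ) : ZMod (k + 1)) by linear_combination -h0,
        ZMod.val_cast_of_lt (by omega)]
    have hmcos : Real.cos (g + β * ((k : ℕ) : ℝ)) = Real.cos (g - β) := by
      rw [show g + β * ((k : ℕ) : ℝ) = (g - β) + 2 * Real.pi by
        rw [hkN]; linear_combination hβN]
      exact Real.cos_add_two_pi _
    have hmsin : Real.sin (g + β * ((k : ℕ) : ℝ)) = Real.sin (g - β) := by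
      rw [show g + β * ((k : ℕ) : ℝ) = (g - β) + 2 * Real.pi by
        rw [hkN]; linear_combination hβN]
      exact Real.sin_add_two_pi _
    set mpt : Pt := midpoint ℝ (u (j + 1)) (u (j - 1)) with hmptdef
    have hmpt0 : mpt 0 = c 0 + R * (Real.cos β * Real.cos g) := by
      rw [hmptdef, mid_apply, hu0 (j + 1), hu0 (j - 1), hj1, hjm1, hmcos]
      rw [Nat.cast_one, mul_one, Real.cos_add, Real.cos_sub]
      ring
    have hmpt1 : mpt 1 = c 1 + R * (Real.sin β * 0 + Real.cos β * Real.sin g) := by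
      rw [hmptdef, mid_apply, hu1 (j + 1), hu1 (j - 1), hj1, hjm1, hmsin]
      rw [Nat.cast_one, mul_one, Real.sin_add, Real.sin_sub]
      ring
    have hdist_mpt : dist (u j) mpt = R * (1 - Real.cos β) := by
      rw [dist_eq_norm]
      apply pt_norm_eq _ _ hdpos
      rw [PiLp.sub_apply, PiLp.sub_apply, hwj0, hwj1, hmpt0, hmpt1]
      linear_combination (R * (1 - Real.cos β))^2 * (Real.sin_sq_add_cos_sq g)
    -- sets
    set Q : Set Pt := convexHull ℝ (u '' {i | i ≠ j}) with hQdef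
    set P : Set Pt := convexHull ℝ (Set.range u) with hPdef
    have hQsub : Q ⊆ P := convexHull_mono (Set.image_subset_range u _)
    have hj1ne : j + 1 ≠ j := by
      intro h
      exact one_ne_zero (add_eq_left.mp h)
    have hjm1ne : j - 1 ≠ j := by
      intro h
      exact one_ne_zero (sub_eq_self.mp h)
    have hPne : P.Nonempty := ⟨u j, subset_convexHull ℝ _ ⟨j, rfl⟩⟩
    have hQne : Q.Nonempty := ⟨u (j + 1), subset_convexHull ℝ _ ⟨j + 1, hj1ne, rfl⟩⟩
    have hPb : Bornology.IsBounded P := by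
      rw [hPdef]
      exact isBounded_convexHull.mpr (Set.finite_range u).isBounded
    have hQb : Bornology.IsBounded Q := by
      rw [hQdef]
      exact isBounded_convexHull.mpr ((Set.toFinite {i | i ≠ j}).image u).isBounded
    have hfin := Metric.hausdorffEdist_ne_top_of_nonempty_of_bounded hPne hQne hPb hQb
    have hmptQ : mpt ∈ Q := by
      rw [hQdef, hmptdef]
      exact segment_subset_convexHull
        (show u (j + 1) ∈ u '' {i | i ≠ j} from ⟨j + 1, hj1ne, rfl⟩)
        (show u (j - 1) ∈ u '' {i | i ≠ j} from ⟨j - 1, hjm1ne, rfl⟩)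
        (midpoint_mem_segment _ _)
    -- supporting halfplane for Q
    have hvert : ∀ i : ZMod (k + 1), i ≠ j →
        Real.cos g * u i 0 + Real.sin g * u i 1
          ≤ (Real.cos g * c 0 + Real.sin g * c 1) + R * Real.cos β := by
      intro i hi
      rw [hu0 i, hu1 i]
      have hm1 : 1 ≤ (i - j).val := by
        rcases Nat.eq_zero_or_pos (i - j).val with h0 | h0
        · exact absurd (sub_eq_zero.mp ((ZMod.val_eq_zero _).mp h0)) hi
        · exact h0
      have hm2 : (i - j).val ≤ k := by have := ZMod.val_lt (i - j); omega
      have hcosm : Real.cos (β * (((i - j).val : ℕ) : ℝ)) ≤ Real.cos β := by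
        apply cos_le_of_between β (β * (((i - j).val : ℕ) : ℝ)) hβpos
        · nlinarith [show (1 : ℝ) ≤ (((i - j).val : ℕ) : ℝ) from by exact_mod_cast hm1]
        · have hle : ((((i - j).val : ℕ)) : ℝ) ≤ ((k : ℕ) : ℝ) := by exact_mod_cast hm2
          rw [hkN] at hle
          nlinarith
      have hexp : Real.cos (g + β * (((i - j).val : ℕ) : ℝ)) * Real.cos g
          + Real.sin (g + β * (((i - j).val : ℕ) : ℝ)) * Real.sin g
          = Real.cos (β * (((i - j).val : ℕ) : ℝ)) := by
        rw [← Real.cos_sub]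
        congr 1
        ring
      nlinarith [hexp, hcosm, hRpos]
    have hQle : ∀ y ∈ Q, Real.cos g * y 0 + Real.sin g * y 1
        ≤ (Real.cos g * c 0 + Real.sin g * c 1) + R * Real.cos β := by
      have hconv : Convex ℝ {y : Pt | Real.cos g * y 0 + Real.sin g * y 1
          ≤ (Real.cos g * c 0 + Real.sin g * c 1) + R * Real.cos β} := by
        intro x hx y hy a b ha hb hab
        simp only [Set.mem_setOf_eq] at hx hy ⊢
        rw [PiLp.add_apply, PiLp.add_apply, PiLp.smul_apply, PiLp.smul_apply,
          PiLp.smul_apply, PiLp.smul_apply, smul_eq_mul, smul_eq_mul, smul_eq_mul, smul_eq_mul]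
        have hC : a * ((Real.cos g * c 0 + Real.sin g * c 1) + R * Real.cos β)
            + b * ((Real.cos g * c 0 + Real.sin g * c 1) + R * Real.cos β)
            = (Real.cos g * c 0 + Real.sin g * c 1) + R * Real.cos β := by
          rw [← add_mul, hab, one_mul]
        nlinarith [mul_le_mul_of_nonneg_left hx ha, mul_le_mul_of_nonneg_left hy hb]
      intro y hy
      have hsub : Q ⊆ {y : Pt | Real.cos g * y 0 + Real.sin g * y 1
          ≤ (Real.cos g * c 0 + Real.sin g * c 1) + R * Real.cos β} := by
        rw [hQdef]
        exact convexHull_min (by rintro z ⟨i, hi, rfl⟩; exact hvert i hi) hconv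
      exact hsub hy
    have hlow : ∀ y ∈ Q, R * (1 - Real.cos β) ≤ dist (u j) y := by
      intro y hy
      have h1 := hQle y hy
      have h2 : Real.cos g * (u j - y) 0 + Real.sin g * (u j - y) 1 ≤ dist (u j) y := by
        rw [dist_eq_norm]
        exact cs_bound _ _ (Real.cos_sq_add_sin_sq g) _
      rw [PiLp.sub_apply, PiLp.sub_apply, hwj0, hwj1] at h2
      nlinarith [Real.sin_sq_add_cos_sq g]
    -- upper bound
    have hup : ∀ x ∈ P, ∃ y ∈ Q, dist x y ≤ R * (1 - Real.cos β) := by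
      intro x hx
      rw [hPdef, convexHull_eq] at hx
      obtain ⟨ι, t, w, z, hw0, hw1, hz, rfl⟩ := hx
      have hQconv : Convex ℝ Q := by rw [hQdef]; exact convex_convexHull ℝ _
      refine ⟨t.centerMass w (fun i => if z i = u j then mpt else z i),
        hQconv.centerMass_mem hw0 (by rw [hw1]; norm_num) ?_, ?_⟩
      · intro i hi
        by_cases h : z i = u j
        · rw [if_pos h]; exact hmptQ
        · rw [if_neg h]
          obtain ⟨l, hl⟩ := hz i hi
          have hlj : l ≠ j := fun e => h (by rw [← hl, e])
          rw [hQdef]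
          exact subset_convexHull ℝ _ ⟨l, hlj, hl⟩
      · rw [dist_eq_norm, Finset.centerMass_eq_of_sum_1 _ _ hw1,
          Finset.centerMass_eq_of_sum_1 _ _ hw1, ← Finset.sum_sub_distrib]
        have hterm : ∀ i ∈ t, w i • z i - w i • (if z i = u j then mpt else z i)
            = (if z i = u j then w i else 0) • (u j - mpt) := by
          intro i hi
          by_cases h : z i = u j
          · rw [if_pos h, if_pos h, h, ← smul_sub]
          · rw [if_neg h, if_neg h, sub_self, zero_smul]
        rw [Finset.sum_congr rfl hterm, ← Finset.sum_smul, norm_smul, Real.norm_eq_abs]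
        have hW0 : 0 ≤ ∑ i ∈ t, (if z i = u j then w i else 0) := by
          apply Finset.sum_nonneg
          intro i hi
          by_cases h : z i = u j
          · rw [if_pos h]; exact hw0 i hi
          · rw [if_neg h]
        have hW1 : (∑ i ∈ t, if z i = u j then w i else 0) ≤ 1 := by
          rw [← hw1]
          apply Finset.sum_le_sum
          intro i hi
          by_cases h : z i = u j
          · rw [if_pos h]
          · rw [if_neg h]; exact hw0 i hi
        rw [abs_of_nonneg hW0, ← dist_eq_norm, hdist_mpt]
        nlinarith
    have hub : Metric.hausdorffDist P Q ≤ R * (1 - Real.cos β) :=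
      Metric.hausdorffDist_le_of_mem_dist hdpos hup
        (fun y hy => ⟨y, hQsub hy, by simp [hdpos]⟩)
    have hlb : R * (1 - Real.cos β) ≤ Metric.hausdorffDist P Q := by
      by_contra hcon
      push_neg at hcon
      have h1 : Metric.infDist (u j) Q ≤ Metric.hausdorffDist P Q :=
        Metric.infDist_le_hausdorffDist_of_mem (subset_convexHull ℝ _ ⟨j, rfl⟩) hfin
      obtain ⟨y, hyQ, hyd⟩ := (Metric.infDist_lt_iff hQne).1 (lt_of_le_of_lt h1 hcon)
      exact absurd hyd (not_lt.2 (hlow y hyQ))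
    rw [le_antisymm hub hlb, hd]
  refine ⟨main, ?_⟩
  simp only [main]
  exact ciInf_const
end
end
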